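/- Let L_W(y,p) = -∑_j W_{c j} log(p_j) be a weighted cross-entropy with true class c, where W_{cc} > W_{cj} ≥ 0 for all j ≠ c. If p and q are probability vectors obtained from each other by swapping the values at indices c and some j ≠ c, with p_c > p_j, then L_W(y,p) < L_W(y,q). -/
import Mathlib

theorem swap_with_true_class (n : ℕ) (W p q : Fin n → ℝ) (c j : Fin n)
    (hjc : j ≠ c)
    (hW0 : ∀ k, 0 ≤ W k) (hWdom : ∀ k, k ≠ c → W c > W k)
    (hp : ∀ k, 0 < p k) (hp1 : ∀ k, p k ≤ 1)
    (hq : ∀ k, 0 < q k) (hq1 : ∀ k, q k ≤ 1)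
    (hqc : q c = p j) (hqj : q j = p c)
    (hother : ∀ k, k ≠ c → k ≠ j → q k = p k)
    (hpc : p c > p j) :
    -∑ k, W k * Real.log (p k) < -∑ k, W k * Real.log (q k) := by
  have hWj := hWdom j hjc
  have hlog : Real.log (p j) < Real.log (p c) := Real.log_lt_log (hp j) hpc
  have key : 0 < ∑ k, (W k * Real.log (p k) - W k * Real.log (q k)) := by
    have h0 : ∀ k ∈ Finset.univ, k ∉ ({c, j} : Finset (Fin n)) →
        (W k * Real.log (p k) - W k * Real.log (q k)) = 0 := by
      intro k _ hk
      simp [Finset.mem_insert, Finset.mem_singleton] at hk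
      rw [hother k hk.1 hk.2]; ring
    rw [← Finset.sum_subset (Finset.subset_univ {c, j}) h0,
      Finset.sum_pair (Ne.symm hjc), hqc, hqj]
    nlinarith [hW0 j]
  rw [Finset.sum_sub_distrib] at key
  linarith
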